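/- arXiv:1507.05568 — 5 statements merged into one kernel-verified Lean document; each statement's English description precedes it below -/
import Mathlib

section
/- The two linear pieces defining a agree at the interior junction point t = (α(1+β)−2β)/(2(α−β)), the defining interval [α(1+β)/(2(α−β)), (α(3+β)−2β)/(2(α−β))] has length 1 and the values of a at its two endpoints coincide, so a extends to a continuous 1-periodic function on ℝ. Moreover the map t ↦ t − a(t) is a strictly increasing bijection of ℝ onto ℝ, and F(t − a(t)) = t + a(t) for every t ∈ ℝ, i.e. F = (id + a) ∘ (id − a)⁻¹. -/
/-- The piecewise linear circle map `F`, defined on `[0,1)` by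
`F(x) = l1*x + F0` for `0 ≤ x ≤ x0` and `F(x) = l2*x + F0 + 1 - l2` for `x0 < x < 1`,
extended to ℝ by `F(x+1) = F(x) + 1`. -/
noncomputable def Fmap (l1 l2 F0 x0 : ℝ) (x : ℝ) : ℝ :=
  (if Int.fract x ≤ x0 then l1 * Int.fract x + F0
   else l2 * Int.fract x + F0 + 1 - l2) + (⌊x⌋ : ℝ)

private lemma aux_two_piece_lip (α β t2 c1 c2 ε : ℝ)
    (hjunc : α * t2 + c1 = β * t2 - β + c2) (hεα : α ≤ 1 - ε) (hεβ : β ≤ 1 - ε)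
    (u v : ℝ) (huv : u ≤ v) :
    (if v ≤ t2 then α * v + c1 else β * v - β + c2)
      - (if u ≤ t2 then α * u + c1 else β * u - β + c2) ≤ (1 - ε) * (v - u) := by
  by_cases hu : u ≤ t2 <;> by_cases hv : v ≤ t2
  · rw [if_pos hu, if_pos hv]
    nlinarith [mul_nonneg (by linarith : (0:ℝ) ≤ 1 - ε - α) (by linarith : (0:ℝ) ≤ v - u)]
  · rw [if_pos hu, if_neg hv]
    push_neg at hv
    nlinarith [mul_nonneg (by linarith : (0:ℝ) ≤ 1 - ε - β) (by linarith : (0:ℝ) ≤ v - t2),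
      mul_nonneg (by linarith : (0:ℝ) ≤ 1 - ε - α) (by linarith : (0:ℝ) ≤ t2 - u)]
  · exact absurd (huv.trans hv) hu
  · rw [if_neg hu, if_neg hv]
    nlinarith [mul_nonneg (by linarith : (0:ℝ) ≤ 1 - ε - β) (by linarith : (0:ℝ) ≤ v - u)]

private lemma aux_glue (a : ℝ → ℝ) (t1 ε : ℝ) (hε : 0 < ε)
    (W : ∀ n : ℤ, ∀ s ∈ Set.Icc (t1 + (n : ℝ)) (t1 + n + 1),
      ∀ t ∈ Set.Icc (t1 + (n : ℝ)) (t1 + n + 1), s ≤ t →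
      (s - a s) + ε * (t - s) ≤ t - a t) :
    ∀ s t : ℝ, s ≤ t → (s - a s) + ε * (t - s) ≤ t - a t := by
  have key : ∀ k : ℕ, ∀ s t : ℝ, s ≤ t → ⌊t - t1⌋ ≤ ⌊s - t1⌋ + k →
      (s - a s) + ε * (t - s) ≤ t - a t := by
    intro k
    induction k with
    | zero =>
      intro s t hst hk
      have hfl : ⌊s - t1⌋ ≤ ⌊t - t1⌋ := Int.floor_le_floor (by linarith)
      have hn := Int.floor_le (s - t1)
      have hn' := Int.lt_floor_add_one (t - t1)
      have hn'' := Int.floor_le (t - t1)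
      simp only [Nat.cast_zero, add_zero] at hk
      have heq : ⌊t - t1⌋ = ⌊s - t1⌋ := le_antisymm hk hfl
      have hcast : (⌊t - t1⌋ : ℝ) = (⌊s - t1⌋ : ℝ) := by exact_mod_cast heq
      refine W ⌊s - t1⌋ s ⟨by linarith, by linarith⟩ t ⟨by linarith, by linarith⟩ hst
    | succ k ih =>
      intro s t hst hk
      by_cases hcase : ⌊t - t1⌋ ≤ ⌊s - t1⌋ + k
      · exact ih s t hst hcase
      · push_neg at hcase
        set n := ⌊s - t1⌋ with hn
        have hfn := Int.floor_le (s - t1)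
        have hfn' := Int.lt_floor_add_one (s - t1)
        have hsw : s ≤ t1 + (n : ℝ) + 1 := by linarith
        have hwt : t1 + (n : ℝ) + 1 ≤ t := by
          have h1 : ((n : ℤ) + 1 : ℤ) ≤ ⌊t - t1⌋ := by omega
          have h2 : ((n : ℝ) + 1) ≤ (⌊t - t1⌋ : ℝ) := by exact_mod_cast h1
          have := Int.floor_le (t - t1)
          linarith
        have h1 := W n s ⟨by linarith, hsw⟩ (t1 + (n : ℝ) + 1)
          ⟨by linarith, le_refl _⟩ hsw
        have hwfl : ⌊t1 + (n : ℝ) + 1 - t1⌋ = n + 1 := by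
          have h : t1 + (n : ℝ) + 1 - t1 = ((n + 1 : ℤ) : ℝ) := by push_cast; ring
          rw [h, Int.floor_intCast]
        have h2 := ih (t1 + (n : ℝ) + 1) t hwt (by omega)
        linarith only [h1, h2]
  intro s t hst
  have hfl : ⌊s - t1⌋ ≤ ⌊t - t1⌋ := Int.floor_le_floor (by linarith)
  refine key (⌊t - t1⌋ - ⌊s - t1⌋).toNat s t hst ?_
  rw [Int.toNat_of_nonneg (by omega)]
  omega

private lemma aux_cov (t1 : ℝ) :
    (⋃ n : ℤ, Set.Icc (t1 + (n : ℝ)) (t1 + n + 1)) = Set.univ := by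
  rw [Set.eq_univ_iff_forall]
  intro x
  rw [Set.mem_iUnion]
  refine ⟨⌊x - t1⌋, ?_, ?_⟩
  · have := Int.floor_le (x - t1); linarith
  · have := Int.lt_floor_add_one (x - t1); linarith

private lemma aux_LF (t1 : ℝ) :
    LocallyFinite (fun n : ℤ => Set.Icc (t1 + (n : ℝ)) (t1 + n + 1)) := by
  intro x
  refine ⟨Set.Ioo (x - 1) (x + 1), Ioo_mem_nhds (by linarith) (by linarith), ?_⟩
  apply Set.Finite.subset (Set.finite_Icc ⌈x - t1 - 2⌉ ⌊x - t1 + 1⌋)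
  intro n hn
  obtain ⟨y, ⟨hy1, hy2⟩, hy3, hy4⟩ := hn
  simp only [Set.mem_Icc]
  constructor
  · rw [Int.ceil_le]; linarith
  · rw [Int.le_floor]; linarith

set_option maxHeartbeats 2000000 in
/-- the two linear pieces defining `a` agree at the interior junction point,
the defining interval has length 1 and the values of `a` at its endpoints coincide, so `a`
extends to a continuous 1-periodic function on ℝ; moreover `t ↦ t - a(t)` is a strictly
increasing bijection of ℝ onto ℝ and `F(t - a(t)) = t + a(t)` for every `t`. -/
theorem stmt1 (α β : ℝ) (hα : α ∈ Set.Ioo (-1 : ℝ) 1) (hβ : β ∈ Set.Ioo (-1 : ℝ) 1)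
    (hαβ : α ≠ β) (hsign : (β < 0 ∧ 0 < α) ∨ (α < 0 ∧ 0 < β))
    (l1 l2 F0 x0 : ℝ)
    (hl1 : l1 = (1 + α) / (1 - α)) (hl2 : l2 = (1 + β) / (1 - β))
    (hF0 : F0 = l2 * (l1 - 1) / (l1 - l2)) (hx0 : x0 = (1 - l2) / (l1 - l2))
    (t1 t2 t3 : ℝ)
    (ht1 : t1 = α * (1 + β) / (2 * (α - β)))
    (ht2 : t2 = (α * (1 + β) - 2 * β) / (2 * (α - β)))
    (ht3 : t3 = (α * (3 + β) - 2 * β) / (2 * (α - β))) :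
    (α * t2 + α * (1 - α) * (1 + β) / (2 * (α - β))
      = β * t2 - β + α * (1 - β ^ 2) / (2 * (α - β))) ∧
    t3 - t1 = 1 ∧
    (α * t1 + α * (1 - α) * (1 + β) / (2 * (α - β))
      = β * t3 - β + α * (1 - β ^ 2) / (2 * (α - β))) ∧
    ∃ a : ℝ → ℝ, Continuous a ∧ Function.Periodic a 1 ∧
      (∀ t ∈ Set.Icc t1 t2, a t = α * t + α * (1 - α) * (1 + β) / (2 * (α - β))) ∧
      (∀ t ∈ Set.Icc t2 t3, a t = β * t - β + α * (1 - β ^ 2) / (2 * (α - β))) ∧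
      StrictMono (fun t : ℝ => t - a t) ∧
      Function.Bijective (fun t : ℝ => t - a t) ∧
      ∀ t : ℝ, Fmap l1 l2 F0 x0 (t - a t) = t + a t := by
  obtain ⟨hαm, hαp⟩ := hα
  obtain ⟨hβm, hβp⟩ := hβ
  have hd : α - β ≠ 0 := sub_ne_zero.mpr hαβ
  have hd2 : (2 : ℝ) * (α - β) ≠ 0 := mul_ne_zero two_ne_zero hd
  have h1a : (0 : ℝ) < 1 - α := by linarith
  have h1b : (0 : ℝ) < 1 - β := by linarith
  set c1 : ℝ := α * (1 - α) * (1 + β) / (2 * (α - β)) with hc1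
  set c2 : ℝ := α * (1 - β ^ 2) / (2 * (α - β)) with hc2
  -- basic algebraic identities
  have hjunc : α * t2 + c1 = β * t2 - β + c2 := by
    rw [hc1, hc2, ht2]; field_simp; ring
  have hlen : t3 - t1 = 1 := by
    rw [ht1, ht3]; field_simp; ring
  have ht3' : t3 = t1 + 1 := by linarith
  have hend : α * t1 + c1 = β * t3 - β + c2 := by
    rw [hc1, hc2, ht1, ht3]; field_simp; ring
  have hc1t1 : c1 = (1 - α) * t1 := by rw [hc1, ht1]; field_simp
  -- l1, l2 facts
  have hl1a : l1 * (1 - α) = 1 + α := by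
    rw [hl1]; field_simp
  have hl2b : l2 * (1 - β) = 1 + β := by
    rw [hl2]; field_simp
  have hΔ : l1 - l2 = 2 * (α - β) / ((1 - α) * (1 - β)) := by
    rw [hl1, hl2]; field_simp; ring
  have hΔ0 : l1 - l2 ≠ 0 := by
    rw [hΔ]
    exact div_ne_zero hd2 (mul_ne_zero h1a.ne' h1b.ne')
  have hF0' : F0 = 2 * t1 := by
    have h : F0 * (l1 - l2) = (2 * t1) * (l1 - l2) := by
      rw [hF0, div_mul_cancel₀ _ hΔ0, hl1, hl2, ht1]
      field_simp
      ring
    exact mul_right_cancel₀ hΔ0 h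
  have hx0' : x0 = (1 - α) * (t2 - t1) := by
    have h : x0 * (l1 - l2) = ((1 - α) * (t2 - t1)) * (l1 - l2) := by
      rw [hx0, div_mul_cancel₀ _ hΔ0, hl1, hl2, ht1, ht2]
      field_simp
      ring
    exact mul_right_cancel₀ hΔ0 h
  have hx0b : x0 = (1 - β) * t2 + β - c2 := by
    rw [hx0', hc2, ht1, ht2]; field_simp; ring
  -- position of t2 within the period
  have hdiff : t2 - t1 = -β / (α - β) := by
    rw [ht1, ht2]; field_simp; ring
  have ht21both : 0 < t2 - t1 ∧ t2 - t1 < 1 := by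
    rw [hdiff]
    rcases hsign with ⟨h1, h2⟩ | ⟨h1, h2⟩
    · exact ⟨div_pos (by linarith) (by linarith),
        (div_lt_one (by linarith)).mpr (by linarith)⟩
    · have h3 : -β / (α - β) = β / (β - α) := by
        rw [div_eq_div_iff (by linarith : α - β ≠ 0) (by linarith : β - α ≠ 0)]
        ring
      rw [h3]
      exact ⟨div_pos (by linarith) (by linarith),
        (div_lt_one (by linarith)).mpr (by linarith)⟩
  obtain ⟨ht21, ht21'⟩ := ht21both
  have ht12 : t1 < t2 := by linarith
  -- branch identities for Fmap
  have hlin2c : l2 * (β - c2) + F0 + 1 - l2 = -β + c2 := by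
    rw [hF0', ht1, hc2, hl2]; field_simp; ring
  have hlin1 : ∀ s : ℝ, l1 * ((1 - α) * s - c1) + F0 = (1 + α) * s + c1 := by
    intro s
    rw [hF0', hc1t1]
    linear_combination (s - t1) * hl1a
  have hlin2 : ∀ s : ℝ, l2 * ((1 - β) * s + β - c2) + F0 + 1 - l2 = (1 + β) * s - β + c2 := by
    intro s
    linear_combination s * hl2b + hlin2c
  refine ⟨hjunc, hlen, hend, ?_⟩
  -- the function a
  set A : ℝ → ℝ := fun s => if s ≤ t2 then α * s + c1 else β * s - β + c2 with hA
  set a : ℝ → ℝ := fun t => A (t1 + Int.fract (t - t1)) with ha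
  have hAval : ∀ s, A s = if s ≤ t2 then α * s + c1 else β * s - β + c2 := fun s => rfl
  have haval : ∀ t, a t = A (t1 + Int.fract (t - t1)) := fun t => rfl
  -- periodicity
  have hper : Function.Periodic a 1 := by
    intro t
    rw [haval, haval]
    have h : t + 1 - t1 = (t - t1) + (1 : ℤ) := by push_cast; ring
    rw [h, Int.fract_add_intCast]
  have hperInt : ∀ (x : ℝ) (m : ℤ), a (x + m) = a x := by
    intro x m
    rw [haval, haval]
    have h : x + (m : ℝ) - t1 = (x - t1) + m := by ring
    rw [h, Int.fract_add_intCast]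
  -- a equals a shifted copy of A on each window
  have hwin : ∀ (n : ℤ), ∀ t ∈ Set.Icc (t1 + (n : ℝ)) (t1 + n + 1), a t = A (t - n) := by
    intro n t ⟨h1, h2⟩
    rcases eq_or_lt_of_le h2 with heq | hlt
    · have hteq : t = t1 + (n : ℝ) + 1 := heq
      have h3 : t - t1 = ((n + 1 : ℤ) : ℝ) := by rw [hteq]; push_cast; ring
      rw [haval, h3, Int.fract_intCast]
      have h4 : t - (n : ℝ) = t1 + 1 := by rw [hteq]; ring
      rw [h4]
      have hv1 : A (t1 + 0) = α * t1 + c1 := by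
        rw [hAval]; rw [if_pos (by linarith)]; ring_nf
      have hv2 : A (t1 + 1) = β * (t1 + 1) - β + c2 := by
        rw [hAval]; rw [if_neg (by linarith)]
      rw [hv1, hv2, hend, ht3']
    · have hf : Int.fract (t - t1) = t - t1 - n := by
        have h3 : Int.fract (t - t1 - n) = Int.fract (t - t1) := Int.fract_sub_intCast _ _
        rw [← h3, Int.fract_eq_self]
        constructor <;> [linarith; linarith]
      rw [haval, hf]
      congr 1
      ring
  -- value on [t1, t2]
  have hval1 : ∀ t ∈ Set.Icc t1 t2, a t = α * t + c1 := by
    intro t ⟨h1, h2⟩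
    have h := hwin 0 t ⟨by push_cast; linarith, by push_cast; linarith⟩
    rw [h]
    push_cast
    rw [sub_zero, hAval, if_pos h2]
  -- value on [t2, t3]
  have hval2 : ∀ t ∈ Set.Icc t2 t3, a t = β * t - β + c2 := by
    intro t ⟨h1, h2⟩
    have h := hwin 0 t ⟨by push_cast; linarith, by push_cast; linarith⟩
    rw [h]
    push_cast
    rw [sub_zero, hAval]
    rcases eq_or_lt_of_le h1 with heq | hlt
    · rw [if_pos (le_of_eq heq.symm), ← heq, hjunc]
    · rw [if_neg (by linarith)]
  -- continuity
  have hAcont : Continuous A := by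
    rw [hA]
    refine Continuous.if_le ?_ ?_ continuous_id continuous_const ?_
    · exact (continuous_const.mul continuous_id).add continuous_const
    · exact ((continuous_const.mul continuous_id).sub continuous_const).add continuous_const
    · intro x hx
      rw [hx]
      exact hjunc
  have hcont : Continuous a := by
    refine (aux_LF t1).continuous (aux_cov t1) (fun n => isClosed_Icc) (fun n => ?_)
    exact ((hAcont.comp (continuous_id.sub continuous_const)).continuousOn).congr
      (fun t ht => hwin n t ht)
  -- strict monotonicity with gap
  set ε : ℝ := min (1 - α) (1 - β) with hε
  have hεpos : 0 < ε := lt_min h1a h1b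
  have hεα : α ≤ 1 - ε := by
    have := min_le_left (1 - α) (1 - β); rw [← hε] at this; linarith
  have hεβ : β ≤ 1 - ε := by
    have := min_le_right (1 - α) (1 - β); rw [← hε] at this; linarith
  have W : ∀ n : ℤ, ∀ s ∈ Set.Icc (t1 + (n : ℝ)) (t1 + n + 1),
      ∀ t ∈ Set.Icc (t1 + (n : ℝ)) (t1 + n + 1), s ≤ t →
      (s - a s) + ε * (t - s) ≤ t - a t := by
    intro n s hs t ht hst
    rw [hwin n s hs, hwin n t ht, hAval, hAval]
    have h := aux_two_piece_lip α β t2 c1 c2 ε hjunc hεα hεβ (s - n) (t - n) (by linarith)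
    linarith only [h]
  have hgap := aux_glue a t1 ε hεpos W
  have hsm : StrictMono (fun t : ℝ => t - a t) := by
    intro s t hst
    simp only []
    linarith only [hgap s t hst.le, mul_pos hεpos (sub_pos.mpr hst)]
  have hmono : ∀ s t : ℝ, s ≤ t → s - a s ≤ t - a t := by
    intro s t hst
    linarith only [hgap s t hst, mul_nonneg hεpos.le (sub_nonneg.mpr hst)]
  -- values at window endpoints
  have hg0 : ∀ n : ℤ, (t1 + (n : ℝ)) - a (t1 + n) = n := by
    intro n
    have h := hwin n (t1 + n) ⟨le_refl _, by linarith⟩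
    rw [h]
    have h2 : t1 + (n : ℝ) - n = t1 := by ring
    rw [h2, hAval, if_pos ht12.le, hc1t1]
    ring
  have hgcont : Continuous (fun t : ℝ => t - a t) := continuous_id.sub hcont
  have hsurj : Function.Surjective (fun t : ℝ => t - a t) := by
    intro y
    have hab : t1 + (⌊y⌋ : ℝ) ≤ t1 + ⌊y⌋ + 1 := by linarith
    have hIVT := intermediate_value_Icc hab hgcont.continuousOn
    have he1 : (t1 + (⌊y⌋ : ℝ)) - a (t1 + ⌊y⌋) = ⌊y⌋ := hg0 ⌊y⌋
    have he2 : (t1 + (⌊y⌋ : ℝ) + 1) - a (t1 + ⌊y⌋ + 1) = ⌊y⌋ + 1 := by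
      have h := hg0 (⌊y⌋ + 1)
      push_cast at h ⊢
      rw [← add_assoc] at h
      exact h
    have hy : y ∈ Set.Icc ((t1 + (⌊y⌋ : ℝ)) - a (t1 + ⌊y⌋))
        ((t1 + (⌊y⌋ : ℝ) + 1) - a (t1 + ⌊y⌋ + 1)) := by
      rw [he1, he2]
      exact ⟨Int.floor_le y, (Int.lt_floor_add_one y).le⟩
    obtain ⟨x, _, hx⟩ := hIVT hy
    exact ⟨x, hx⟩
  refine ⟨a, hcont, hper, hval1, hval2, hsm, ⟨hsm.injective, hsurj⟩, ?_⟩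
  -- the conjugacy equation
  intro t
  set n : ℤ := ⌊t - t1⌋ with hn
  set t' : ℝ := t - n with ht'
  have ht'1 : t1 ≤ t' := by
    have := Int.floor_le (t - t1); rw [ht']; linarith
  have ht'2 : t' < t1 + 1 := by
    have := Int.lt_floor_add_one (t - t1); rw [ht']; linarith
  have hat : a t = a t' := by
    have h := hperInt t' n
    rw [ht'] at h ⊢
    simpa using h
  have hx'lo : 0 ≤ t' - a t' := by
    have h := hg0 0
    push_cast at h
    rw [add_zero] at h
    linarith only [hmono t1 t' ht'1, h]
  have hx'hi : t' - a t' < 1 := by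
    have h := hg0 1
    push_cast at h
    have h2 := hsm ht'2
    simp only [] at h2
    linarith only [h2, h]
  have hxsplit : t - a t = (t' - a t') + (n : ℝ) := by
    rw [hat, ht']; ring
  have hfr : Int.fract (t - a t) = t' - a t' := by
    rw [hxsplit, Int.fract_add_intCast, Int.fract_eq_self]
    exact ⟨hx'lo, hx'hi⟩
  have hfl : (⌊t - a t⌋ : ℝ) = n := by
    rw [hxsplit, Int.floor_add_intCast]
    have h : ⌊t' - a t'⌋ = 0 := Int.floor_eq_zero_iff.mpr ⟨hx'lo, hx'hi⟩
    rw [h]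
    push_cast
    ring
  have hcore : (if t' - a t' ≤ x0 then l1 * (t' - a t') + F0
      else l2 * (t' - a t') + F0 + 1 - l2) = t' + a t' := by
    by_cases hb : t' ≤ t2
    · have hav : a t' = α * t' + c1 := hval1 t' ⟨ht'1, hb⟩
      have hxval : t' - a t' = (1 - α) * t' - c1 := by rw [hav]; ring
      have hle : t' - a t' ≤ x0 := by
        rw [hxval, hx0', hc1t1]
        linarith only [mul_le_mul_of_nonneg_left hb h1a.le]
      rw [if_pos hle, hxval, hlin1 t', hav]
      ring
    · push_neg at hb
      have hav : a t' = β * t' - β + c2 := hval2 t' ⟨hb.le, by rw [ht3']; linarith⟩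
      have hxval : t' - a t' = (1 - β) * t' + β - c2 := by rw [hav]; ring
      have hgt : ¬ (t' - a t' ≤ x0) := by
        push_neg
        rw [hxval, hx0b]
        linarith only [mul_lt_mul_of_pos_left hb h1b]
      rw [if_neg hgt, hxval, hlin2 t', hav]
      ring
  rw [Fmap, hfr, hfl, hcore, hat, ht']
  push_cast
  ring
end

section
/- For every x ∈ ℝ, the limit lim_{n→∞} (Fⁿ(x) − x)/n exists and equals ln(l1)/ln(l1/l2). In particular the rotation number of F is ρ(F) = ln(l1)/ln(l1/l2). -/
/-!
With `h y = log (l2 + (l1 - l2) * fract y) / log (l1 / l2) + ⌊y⌋`, a degree-one map at bounded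
distance from the identity, `F` is semiconjugate to the translation by
`ρ = log l1 / log (l1 / l2)`: each linear branch of `F` multiplies the affine coordinate
`l2 + (l1 - l2) * t` by its slope `l1` or `l2`, which `h` turns into a shift by
`log l1 / log (l1 / l2)` resp. `log l2 / log (l1 / l2) + 1` (the second branch crosses an
integer), and both shifts equal `ρ`. Hence `Fⁿ x - x = n * ρ + O(1)`.
-/

open Real Filter Topology Function Set

theorem tendsto_iterate_sub_div_of_semiconj {f h : ℝ → ℝ} {ρ C : ℝ}
    (hsemi : Semiconj h f (· + ρ)) (hC : ∀ y, |h y - y| ≤ C) (x : ℝ) :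
    Tendsto (fun n : ℕ => (f^[n] x - x) / n) atTop (𝓝 ρ) := by
  have hiter (n : ℕ) : h (f^[n] x) = h x + n * ρ := by
    simpa only [add_right_iterate_apply, nsmul_eq_mul] using hsemi.iterate_right n x
  have hbound (n : ℕ) : |(f^[n] x - x) - n * ρ| ≤ 2 * C := by
    calc |(f^[n] x - x) - n * ρ| = |(h x - x) - (h (f^[n] x) - f^[n] x)| := by
          rw [hiter]; ring_nf
      _ ≤ |h x - x| + |h (f^[n] x) - f^[n] x| := abs_sub _ _
      _ ≤ 2 * C := by linarith [hC x, hC (f^[n] x)]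
  refine tendsto_sub_nhds_zero_iff.mp
    (squeeze_zero_norm' ?_ (tendsto_const_div_atTop_nhds_zero_nat (2 * C)))
  filter_upwards [eventually_gt_atTop 0] with n hn
  have hn : (0 : ℝ) < n := Nat.cast_pos.mpr hn
  rw [norm_eq_abs, div_sub' hn.ne', abs_div, abs_of_pos hn]
  gcongr
  exact hbound n

noncomputable def fractLift (g : ℝ → ℝ) (y : ℝ) : ℝ := g (Int.fract y) + ⌊y⌋

section fractLift

variable {g : ℝ → ℝ}

theorem fractLift_add_intCast (y : ℝ) (k : ℤ) : fractLift g (y + k) = fractLift g y + k := by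
  simp only [fractLift, Int.fract_add_intCast, Int.floor_add_intCast, Int.cast_add]
  ring

theorem fractLift_eq_of_mem_Icc (hg : g 1 = g 0 + 1) {v : ℝ} (hv : v ∈ Icc 0 1) :
    fractLift g v = g v := by
  rcases hv.2.lt_or_eq with hv1 | rfl
  · simp [fractLift, Int.fract_eq_self.mpr ⟨hv.1, hv1⟩,
      Int.floor_eq_zero_iff.mpr ⟨hv.1, hv1⟩]
  · simp [fractLift, hg]

theorem exists_abs_fractLift_sub_le (hg : ContinuousOn g (Icc 0 1)) :
    ∃ C, ∀ y, |fractLift g y - y| ≤ C := by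
  obtain ⟨C, hC⟩ := isCompact_Icc.exists_bound_of_continuousOn (hg.sub continuousOn_id)
  refine ⟨C, fun y => ?_⟩
  have hy : fractLift g y - y = g (Int.fract y) - Int.fract y := by
    rw [fractLift, Int.fract]; ring
  simpa [hy] using hC (Int.fract y) ⟨Int.fract_nonneg y, (Int.fract_lt_one y).le⟩

end fractLift

noncomputable def logCoord (l1 l2 t : ℝ) : ℝ := log (l2 + (l1 - l2) * t) / log (l1 / l2)

section logCoord

variable {l1 l2 : ℝ}

theorem logCoord_eq_add_of_eq_mul {s t c : ℝ} (hc : 0 < c) (ht : 0 < l2 + (l1 - l2) * t)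
    (hst : l2 + (l1 - l2) * s = c * (l2 + (l1 - l2) * t)) :
    logCoord l1 l2 s = logCoord l1 l2 t + log c / log (l1 / l2) := by
  rw [logCoord, logCoord, hst, log_mul hc.ne' ht.ne', add_div, add_comm]

theorem affine_pos_of_mem_Icc (hl1 : 0 < l1) (hl2 : 0 < l2) {t : ℝ} (ht : t ∈ Icc 0 1) :
    0 < l2 + (l1 - l2) * t := by
  rcases ht.1.eq_or_lt with rfl | ht0
  · simpa using hl2
  · nlinarith [mul_pos hl1 ht0, mul_nonneg hl2.le (sub_nonneg.2 ht.2)]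

theorem log_div_ne_zero_of_ne (hl1 : 0 < l1) (hl2 : 0 < l2) (hne : l1 ≠ l2) :
    log (l1 / l2) ≠ 0 :=
  log_ne_zero_of_pos_of_ne_one (div_pos hl1 hl2) (div_ne_one_of_ne hne)

theorem logCoord_one (hl1 : 0 < l1) (hl2 : 0 < l2) (hne : l1 ≠ l2) :
    logCoord l1 l2 1 = logCoord l1 l2 0 + 1 := by
  rw [logCoord_eq_add_of_eq_mul (s := 1) (t := 0) (div_pos hl1 hl2) (by simpa using hl2)
    (by field_simp; ring), div_self (log_div_ne_zero_of_ne hl1 hl2 hne)]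

theorem continuousOn_logCoord (hl1 : 0 < l1) (hl2 : 0 < l2) :
    ContinuousOn (logCoord l1 l2) (Icc 0 1) := by
  refine ContinuousOn.div_const (ContinuousOn.log (by fun_prop) fun t ht => ?_) _
  exact (affine_pos_of_mem_Icc hl1 hl2 ht).ne'

end logCoord

theorem semiconj_Fmap_add_log_div {l1 l2 F0 x0 : ℝ} (hl1 : 0 < l1) (hl2 : 0 < l2)
    (hne : l1 ≠ l2) (hx0 : x0 ∈ Icc 0 1) (hx0_left : l1 * x0 + F0 = 1)
    (hx0_right : l2 * x0 + F0 = l2) :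
    Semiconj (fractLift (logCoord l1 l2)) (Fmap l1 l2 F0 x0) (· + log l1 / log (l1 / l2)) := by
  intro y
  have hF0 : (l1 - l2) * F0 = l2 * (l1 - 1) := by
    linear_combination l1 * hx0_right - l2 * hx0_left
  have hF0_mem : F0 ∈ Icc 0 1 := ⟨by nlinarith [hx0.2], by nlinarith [hx0.1]⟩
  have hg : logCoord l1 l2 1 = logCoord l1 l2 0 + 1 := logCoord_one hl1 hl2 hne
  have ht : Int.fract y ∈ Icc 0 1 := ⟨Int.fract_nonneg y, (Int.fract_lt_one y).le⟩
  have hu := affine_pos_of_mem_Icc hl1 hl2 ht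
  have hy : fractLift (logCoord l1 l2) y = logCoord l1 l2 (Int.fract y) + ⌊y⌋ := rfl
  simp only [Fmap]
  split_ifs with hc
  · have hv : l1 * Int.fract y + F0 ∈ Icc 0 1 :=
      ⟨by nlinarith [mul_nonneg hl1.le ht.1, hF0_mem.1], by nlinarith⟩
    rw [fractLift_add_intCast, fractLift_eq_of_mem_Icc hg hv,
      logCoord_eq_add_of_eq_mul hl1 hu (by linear_combination hF0), hy]
    ring
  · have hv : l2 * Int.fract y + F0 - l2 ∈ Icc 0 1 :=
      ⟨by nlinarith, by nlinarith [mul_nonneg hl2.le (sub_nonneg.2 ht.2), hF0_mem.2]⟩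
    have hshift : l2 * Int.fract y + F0 + 1 - l2 + ⌊y⌋ =
        (l2 * Int.fract y + F0 - l2) + ((⌊y⌋ + 1 : ℤ) : ℝ) := by
      push_cast; ring
    have hrot : log l2 / log (l1 / l2) + 1 = log l1 / log (l1 / l2) := by
      field_simp [log_div_ne_zero_of_ne hl1 hl2 hne]
      rw [log_div hl1.ne' hl2.ne']
      ring
    rw [hshift, fractLift_add_intCast, fractLift_eq_of_mem_Icc hg hv,
      logCoord_eq_add_of_eq_mul hl2 hu (by linear_combination hF0), hy, ← hrot]
    push_cast
    ring

theorem tendsto_iterate_Fmap_sub_div {l1 l2 F0 x0 : ℝ} (hl1 : 0 < l1) (hl2 : 0 < l2)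
    (hne : l1 ≠ l2) (hbetween : (l1 - 1) * (l2 - 1) ≤ 0)
    (hF0 : F0 = l2 * (l1 - 1) / (l1 - l2)) (hx0 : x0 = (1 - l2) / (l1 - l2)) (x : ℝ) :
    Tendsto (fun n : ℕ => ((Fmap l1 l2 F0 x0)^[n] x - x) / n) atTop
      (𝓝 (log l1 / log (l1 / l2))) := by
  have hsub : l1 - l2 ≠ 0 := sub_ne_zero.2 hne
  have hx0_mem : x0 ∈ Icc 0 1 := by
    have hsq : 0 < (l1 - l2) ^ 2 := pow_two_pos_of_ne_zero hsub
    have hx0_sq : x0 * (l1 - l2) ^ 2 = (1 - l2) * (l1 - l2) := by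
      rw [hx0]; field_simp
    constructor
    · by_contra! h
      nlinarith [mul_neg_of_neg_of_pos h hsq, sq_nonneg (1 - l2)]
    · by_contra! h
      nlinarith [mul_lt_mul_of_pos_right h hsq, sq_nonneg (l1 - 1)]
  obtain ⟨C, hC⟩ := exists_abs_fractLift_sub_le (continuousOn_logCoord hl1 hl2)
  refine tendsto_iterate_sub_div_of_semiconj
    (semiconj_Fmap_add_log_div hl1 hl2 hne hx0_mem ?_ ?_) hC x
  all_goals rw [hF0, hx0]; field_simp; ring

theorem stmt2_general (α β : ℝ) (hα : α ∈ Set.Ioo (-1 : ℝ) 1) (hβ : β ∈ Set.Ioo (-1 : ℝ) 1)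
    (hsign : (β < 0 ∧ 0 < α) ∨ (α < 0 ∧ 0 < β))
    (l1 l2 F0 x0 : ℝ)
    (hl1 : l1 = (1 + α) / (1 - α)) (hl2 : l2 = (1 + β) / (1 - β))
    (hF0 : F0 = l2 * (l1 - 1) / (l1 - l2)) (hx0 : x0 = (1 - l2) / (l1 - l2)) :
    ∀ x : ℝ, Filter.Tendsto (fun n : ℕ => ((Fmap l1 l2 F0 x0)^[n] x - x) / (n : ℝ))
      Filter.atTop (nhds (Real.log l1 / Real.log (l1 / l2))) := by
  obtain ⟨hα_gt, hα_lt⟩ := hα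
  obtain ⟨hβ_gt, hβ_lt⟩ := hβ
  have hl1_pos : 0 < l1 := hl1 ▸ div_pos (by linarith) (by linarith)
  have hl2_pos : 0 < l2 := hl2 ▸ div_pos (by linarith) (by linarith)
  have hαβ_neg : α * β < 0 := by rcases hsign with ⟨hβ0, hα0⟩ | ⟨hα0, hβ0⟩ <;> nlinarith
  have hbetween : (l1 - 1) * (l2 - 1) < 0 := by
    have hprod : (l1 - 1) * (l2 - 1) = 4 * (α * β) / ((1 - α) * (1 - β)) := by
      rw [hl1, hl2]; field_simp; ring
    rw [hprod]
    exact div_neg_of_neg_of_pos (by linarith) (mul_pos (by linarith) (by linarith))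
  have hne : l1 ≠ l2 := fun h => by nlinarith [h ▸ hbetween, sq_nonneg (l2 - 1)]
  exact tendsto_iterate_Fmap_sub_div hl1_pos hl2_pos hne hbetween.le hF0 hx0

/-- for every `x`, `(Fⁿ(x) - x)/n` converges to `ln l1 / ln (l1/l2)`;
in particular the rotation number of `F` is `ρ(F) = ln l1 / ln (l1/l2)`. -/
theorem stmt2 (α β : ℝ) (hα : α ∈ Set.Ioo (-1 : ℝ) 1) (hβ : β ∈ Set.Ioo (-1 : ℝ) 1)
    (hαβ : α ≠ β) (hsign : (β < 0 ∧ 0 < α) ∨ (α < 0 ∧ 0 < β))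
    (l1 l2 F0 x0 : ℝ)
    (hl1 : l1 = (1 + α) / (1 - α)) (hl2 : l2 = (1 + β) / (1 - β))
    (hF0 : F0 = l2 * (l1 - 1) / (l1 - l2)) (hx0 : x0 = (1 - l2) / (l1 - l2)) :
    ∀ x : ℝ, Filter.Tendsto (fun n : ℕ => ((Fmap l1 l2 F0 x0)^[n] x - x) / (n : ℝ))
      Filter.atTop (nhds (Real.log l1 / Real.log (l1 / l2))) :=
  stmt2_general α β hα hβ hsign l1 l2 F0 x0 hl1 hl2 hF0 hx0
end

section
/- Define H : ℝ → ℝ by H(x) = ⌊x⌋ + h0·ln|x − ⌊x⌋ + h1| + h2 (the 1-periodic-type extension, satisfying H(x+1) = H(x) + 1, of the formula x ↦ h0·ln|x + h1| + h2 on [0,1)). Then H is continuous and strictly increasing on ℝ and conjugates F to the translation by ρ := h0·ln(l1) = ln(l1)/ln(l1/l2): for every x ∈ ℝ, H(F(x)) = H(x) + ρ. -/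
/-- The conjugating map `H(x) = ⌊x⌋ + h0·ln|x - ⌊x⌋ + h1| + h2`, the extension
satisfying `H(x+1) = H(x) + 1` of `x ↦ h0·ln|x + h1| + h2` on `[0,1)`. -/
noncomputable def Hmap (h0 h1 h2 : ℝ) (x : ℝ) : ℝ :=
  (⌊x⌋ : ℝ) + h0 * Real.log |x - (⌊x⌋ : ℝ) + h1| + h2

/-!
On `[0,1]` the branch `g t = h0 log|t + h1| + h2` of `H` differs by a constant from
`h0 log((1 - t) l2 + t l1)`, so it is strictly increasing with `g 1 = g 0 + 1`; hence
`H x = ⌊x⌋ + g (fract x)` is a continuous strictly increasing lift of degree one.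
The point `-h1` is the common fixed point of the affine maps `t ↦ l1 t + F0` and
`t ↦ l2 t + F0 - l2` that make up `F` on `[0,1)`, so both are scalings about `-h1`, which `g`
turns into the translations by `h0 log l1` and `h0 log l2`. These differ by exactly
`h0 (log l1 - log l2) = 1`, matching the jump of `F` by one at `x0`.
-/

open Real Set Int

noncomputable def degreeOneLift (g : ℝ → ℝ) (x : ℝ) : ℝ := ⌊x⌋ + g (fract x)

section DegreeOneLift

variable {g : ℝ → ℝ}

theorem degreeOneLift_add_intCast (g : ℝ → ℝ) (x : ℝ) (n : ℤ) :
    degreeOneLift g (x + n) = degreeOneLift g x + n := by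
  simp only [degreeOneLift, fract_add_intCast, floor_add_intCast, cast_add]
  ring

theorem degreeOneLift_of_mem_Icc (hg : g 1 = g 0 + 1) {m : ℤ} {y : ℝ}
    (hy : y ∈ Icc (m : ℝ) (m + 1)) : degreeOneLift g y = m + g (y - m) := by
  suffices h : ∀ t ∈ Icc (0 : ℝ) 1, degreeOneLift g t = g t by
    rw [← h (y - m) ⟨by linarith [hy.1], by linarith [hy.2]⟩, add_comm,
      ← degreeOneLift_add_intCast, sub_add_cancel]
  rintro t ⟨ht0, ht1⟩
  rcases ht1.lt_or_eq with ht1 | rfl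
  · simp [degreeOneLift, fract_eq_self.2 ⟨ht0, ht1⟩, floor_eq_zero_iff.2 ⟨ht0, ht1⟩]
  · simp [degreeOneLift, hg, add_comm]

theorem continuous_degreeOneLift (hc : ContinuousOn g (Icc 0 1)) (hg : g 1 = g 0 + 1) :
    Continuous (degreeOneLift g) := by
  have hlift : degreeOneLift g = fun x => x + ((fun t => g t - t) ∘ fract) x := by
    ext x
    simp only [degreeOneLift, Function.comp, ← self_sub_floor]
    ring
  rw [hlift]
  exact continuous_id.add ((hc.sub continuousOn_id).comp_fract'' (by simp [hg]))

theorem strictMono_degreeOneLift (hm : StrictMonoOn g (Icc 0 1)) (hg : g 1 = g 0 + 1) :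
    StrictMono (degreeOneLift g) := by
  intro x y hxy
  have hx : fract x ∈ Icc 0 1 := ⟨fract_nonneg x, (fract_lt_one x).le⟩
  have hy : fract y ∈ Icc 0 1 := ⟨fract_nonneg y, (fract_lt_one y).le⟩
  simp only [degreeOneLift]
  rcases (floor_le_floor hxy.le).lt_or_eq with hfl | hfl
  · have hgx : g (fract x) < g 1 := hm hx ⟨zero_le_one, le_rfl⟩ (fract_lt_one x)
    have hgy : g 0 ≤ g (fract y) := hm.monotoneOn ⟨le_rfl, zero_le_one⟩ hy hy.1
    have hfl' : (⌊x⌋ : ℝ) + 1 ≤ ⌊y⌋ := by exact_mod_cast hfl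
    linarith
  · have hfr : fract x < fract y := by
      rw [← self_sub_floor, ← self_sub_floor, hfl]
      linarith
    rw [hfl]
    linarith [hm hx hy hfr]

end DegreeOneLift

noncomputable def logBranch (h0 h1 h2 t : ℝ) : ℝ := h0 * log |t + h1| + h2

theorem Hmap_eq_degreeOneLift (h0 h1 h2 : ℝ) :
    Hmap h0 h1 h2 = degreeOneLift (logBranch h0 h1 h2) := by
  ext x
  simp only [Hmap, degreeOneLift, logBranch, self_sub_floor]
  ring

theorem logBranch_mul_add_sub (h0 h1 h2 : ℝ) {l t : ℝ} (hl : 0 < l) (ht : t + h1 ≠ 0) :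
    logBranch h0 h1 h2 (l * (t + h1) - h1) = logBranch h0 h1 h2 t + h0 * log l := by
  simp only [logBranch, sub_add_cancel, abs_mul, abs_of_pos hl,
    log_mul hl.ne' (abs_ne_zero.2 ht)]
  ring

section LogBranch

variable {l1 l2 h0 h1 : ℝ}

theorem mul_log_sub_log_eq_one (hl1 : 0 < l1) (hl2 : 0 < l2) (hl : l1 ≠ l2)
    (hh0 : h0 = 1 / log (l1 / l2)) : h0 * (log l1 - log l2) = 1 := by
  have hne : log (l1 / l2) ≠ 0 := by
    simp [log_div hl1.ne' hl2.ne', sub_eq_zero, log_injOn_pos.eq_iff hl1 hl2, hl]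
  rw [hh0, ← log_div hl1.ne' hl2.ne', one_div_mul_cancel hne]

theorem add_mul_sub_eq (hl : l1 ≠ l2) (hh1 : h1 = l2 / (l1 - l2)) (t : ℝ) :
    (t + h1) * (l1 - l2) = (1 - t) * l2 + t * l1 := by
  rw [hh1]
  field_simp [sub_ne_zero.2 hl]
  ring

theorem one_sub_mul_add_mul_pos (hl1 : 0 < l1) (hl2 : 0 < l2) {t : ℝ}
    (ht : t ∈ Icc (0 : ℝ) 1) : 0 < (1 - t) * l2 + t * l1 := by
  rcases ht.2.lt_or_eq with ht1 | rfl
  · nlinarith [ht.1]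
  · simpa using hl1

theorem add_ne_zero_of_mem_Icc (hl1 : 0 < l1) (hl2 : 0 < l2) (hl : l1 ≠ l2)
    (hh1 : h1 = l2 / (l1 - l2)) {t : ℝ} (ht : t ∈ Icc (0 : ℝ) 1) : t + h1 ≠ 0 :=
  left_ne_zero_of_mul ((add_mul_sub_eq hl hh1 t).symm ▸ (one_sub_mul_add_mul_pos hl1 hl2 ht).ne')

theorem log_abs_add (hl1 : 0 < l1) (hl2 : 0 < l2) (hl : l1 ≠ l2)
    (hh1 : h1 = l2 / (l1 - l2)) {t : ℝ} (ht : t ∈ Icc (0 : ℝ) 1) :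
    log |t + h1| = log ((1 - t) * l2 + t * l1) - log |l1 - l2| := by
  rw [← add_mul_sub_eq hl hh1, ← log_abs ((t + h1) * _), abs_mul,
    log_mul (abs_ne_zero.2 (add_ne_zero_of_mem_Icc hl1 hl2 hl hh1 ht))
      (abs_ne_zero.2 (sub_ne_zero.2 hl)), add_sub_cancel_right]

variable (h2 : ℝ)

theorem logBranch_one (hl1 : 0 < l1) (hl2 : 0 < l2) (hl : l1 ≠ l2)
    (hh0 : h0 = 1 / log (l1 / l2)) (hh1 : h1 = l2 / (l1 - l2)) :
    logBranch h0 h1 h2 1 = logBranch h0 h1 h2 0 + 1 := by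
  have hlog1 := log_abs_add hl1 hl2 hl hh1 (t := 1) ⟨zero_le_one, le_rfl⟩
  have hlog0 := log_abs_add hl1 hl2 hl hh1 (t := 0) ⟨le_rfl, zero_le_one⟩
  simp only [sub_self, zero_mul, one_mul, zero_add, sub_zero, add_zero] at hlog1 hlog0
  simp only [logBranch, zero_add, hlog1, hlog0]
  linear_combination mul_log_sub_log_eq_one hl1 hl2 hl hh0

theorem continuousOn_logBranch (hl1 : 0 < l1) (hl2 : 0 < l2) (hl : l1 ≠ l2)
    (hh1 : h1 = l2 / (l1 - l2)) : ContinuousOn (logBranch h0 h1 h2) (Icc 0 1) :=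
  (continuousOn_const.mul ((continuous_add_const h1).abs.continuousOn.log
    fun _ ht => abs_ne_zero.2 (add_ne_zero_of_mem_Icc hl1 hl2 hl hh1 ht))).add
    continuousOn_const

theorem strictMonoOn_logBranch (hl1 : 0 < l1) (hl2 : 0 < l2) (hl : l1 ≠ l2)
    (hh0 : h0 = 1 / log (l1 / l2)) (hh1 : h1 = l2 / (l1 - l2)) :
    StrictMonoOn (logBranch h0 h1 h2) (Icc 0 1) := by
  intro s hs t ht hst
  have hps := one_sub_mul_add_mul_pos hl1 hl2 hs
  have hpt := one_sub_mul_add_mul_pos hl1 hl2 ht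
  simp only [logBranch, log_abs_add hl1 hl2 hl hh1 hs, log_abs_add hl1 hl2 hl hh1 ht,
    add_lt_add_iff_right, hh0, log_div hl1.ne' hl2.ne', one_div_mul_eq_div]
  rcases hl.lt_or_gt with hlt | hgt
  · rw [div_lt_div_right_of_neg (sub_neg.2 (log_lt_log hl1 hlt))]
    have := log_lt_log hpt (show _ < (1 - s) * l2 + s * l1 by nlinarith)
    linarith
  · rw [div_lt_div_iff_of_pos_right (sub_pos.2 (log_lt_log hl2 hgt))]
    have := log_lt_log hps (show _ < (1 - t) * l2 + t * l1 by nlinarith)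
    linarith

end LogBranch

theorem Fmap_add_intCast (l1 l2 F0 x0 x : ℝ) (n : ℤ) :
    Fmap l1 l2 F0 x0 (x + n) = Fmap l1 l2 F0 x0 x + n := by
  simp only [Fmap, fract_add_intCast, floor_add_intCast, cast_add]
  ring

section Conjugacy

variable {l1 l2 F0 x0 h0 h1 : ℝ}

theorem F0_mem_Icc (hl1 : 0 < l1) (hl2 : 0 < l2) (hC : (1 < l1 ∧ l2 < 1) ∨ (l1 < 1 ∧ 1 < l2)) :
    l2 * (l1 - 1) / (l1 - l2) ∈ Icc 0 1 := by
  rcases hC with ⟨hl1C, hl2C⟩ | ⟨hl1C, hl2C⟩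
  · exact ⟨div_nonneg (by nlinarith) (by linarith), (div_le_one (by linarith)).2 (by nlinarith)⟩
  · exact ⟨div_nonneg_of_nonpos (by nlinarith) (by linarith),
      (div_le_one_of_neg (by linarith)).2 (by nlinarith)⟩

theorem Hmap_Fmap_of_mem_Ico (hl1 : 0 < l1) (hl2 : 0 < l2)
    (hC : (1 < l1 ∧ l2 < 1) ∨ (l1 < 1 ∧ 1 < l2))
    (hF0 : F0 = l2 * (l1 - 1) / (l1 - l2)) (hx0 : x0 = (1 - l2) / (l1 - l2))
    (hh0 : h0 = 1 / log (l1 / l2)) (hh1 : h1 = l2 / (l1 - l2)) (h2 : ℝ) {t : ℝ}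
    (ht : t ∈ Ico 0 1) :
    Hmap h0 h1 h2 (Fmap l1 l2 F0 x0 t) = Hmap h0 h1 h2 t + h0 * log l1 := by
  have hl : l1 ≠ l2 := hC.elim (fun h => (h.2.trans h.1).ne') (fun h => (h.1.trans h.2).ne)
  have hl' : l1 - l2 ≠ 0 := sub_ne_zero.2 hl
  have hF0mem : F0 ∈ Icc 0 1 := hF0 ▸ F0_mem_Icc hl1 hl2 hC
  have hg1 := logBranch_one h2 hl1 hl2 hl hh0 hh1
  have ht1 := add_ne_zero_of_mem_Icc hl1 hl2 hl hh1 (Ico_subset_Icc_self ht)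
  have hfix1 : F0 = l1 * h1 - h1 := by rw [hF0, hh1]; field_simp
  have hfix2 : F0 - l2 = l2 * h1 - h1 := by rw [hF0, hh1]; field_simp; ring
  have hx01 : l1 * x0 + F0 = 1 := by rw [hx0, hF0]; field_simp; ring
  rw [Hmap_eq_degreeOneLift, degreeOneLift_of_mem_Icc hg1 (m := 0) (y := t)
    (by simpa using Ico_subset_Icc_self ht)]
  simp only [Fmap, fract_eq_self.2 ht, floor_eq_zero_iff.2 ht, cast_zero, add_zero, sub_zero,
    zero_add]
  split_ifs with hx
  · have hlo : 0 ≤ l1 * t + F0 := by nlinarith [hF0mem.1, mul_nonneg hl1.le ht.1]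
    have hhi : l1 * t + F0 ≤ 1 := by nlinarith [mul_le_mul_of_nonneg_left hx hl1.le]
    have hFt : l1 * t + F0 = l1 * (t + h1) - h1 := by linear_combination hfix1
    rw [hFt] at hlo hhi ⊢
    rw [degreeOneLift_of_mem_Icc hg1 (m := 0) (by simpa using And.intro hlo hhi)]
    simp only [cast_zero, sub_zero, zero_add]
    exact logBranch_mul_add_sub h0 h1 h2 hl1 ht1
  · have hx02 : l2 * x0 + F0 = l2 := by rw [hx0, hF0]; field_simp; ring
    have hlo : 0 ≤ l2 * t + F0 - l2 := by
      nlinarith [mul_le_mul_of_nonneg_left (not_le.1 hx).le hl2.le]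
    have hhi : l2 * t + F0 - l2 ≤ 1 := by
      nlinarith [hF0mem.2, mul_le_mul_of_nonneg_left ht.2.le hl2.le]
    have hFt : l2 * t + F0 - l2 = l2 * (t + h1) - h1 := by linear_combination hfix2
    rw [hFt] at hlo hhi
    rw [show l2 * t + F0 + 1 - l2 = l2 * (t + h1) - h1 + (1 : ℤ) by push_cast; linarith,
      degreeOneLift_add_intCast,
      degreeOneLift_of_mem_Icc hg1 (m := 0) (by simpa using And.intro hlo hhi)]
    simp only [cast_zero, sub_zero, zero_add, cast_one]
    rw [logBranch_mul_add_sub h0 h1 h2 hl2 ht1]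
    linear_combination -mul_log_sub_log_eq_one hl1 hl2 hl hh0

theorem Hmap_Fmap (hl1 : 0 < l1) (hl2 : 0 < l2)
    (hC : (1 < l1 ∧ l2 < 1) ∨ (l1 < 1 ∧ 1 < l2))
    (hF0 : F0 = l2 * (l1 - 1) / (l1 - l2)) (hx0 : x0 = (1 - l2) / (l1 - l2))
    (hh0 : h0 = 1 / log (l1 / l2)) (hh1 : h1 = l2 / (l1 - l2)) (h2 x : ℝ) :
    Hmap h0 h1 h2 (Fmap l1 l2 F0 x0 x) = Hmap h0 h1 h2 x + h0 * log l1 := by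
  have hfract := Hmap_Fmap_of_mem_Ico hl1 hl2 hC hF0 hx0 hh0 hh1 h2
    ⟨fract_nonneg x, fract_lt_one x⟩
  rw [← fract_add_floor x, Fmap_add_intCast, Hmap_eq_degreeOneLift, degreeOneLift_add_intCast,
    degreeOneLift_add_intCast, ← Hmap_eq_degreeOneLift, hfract]
  ring

end Conjugacy
theorem one_add_div_one_sub_pos {a : ℝ} (ha : a ∈ Ioo (-1) 1) : 0 < (1 + a) / (1 - a) :=
  div_pos (by linarith [ha.1]) (by linarith [ha.2])

theorem one_lt_one_add_div_one_sub {a : ℝ} (ha : 0 < a) (ha' : a < 1) :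
    1 < (1 + a) / (1 - a) := by
  rw [one_lt_div (by linarith)]
  linarith

theorem one_add_div_one_sub_lt_one {a : ℝ} (ha : a < 0) : (1 + a) / (1 - a) < 1 := by
  rw [div_lt_one (by linarith)]
  linarith

theorem stmt3_general (α β : ℝ) (hα : α ∈ Set.Ioo (-1 : ℝ) 1) (hβ : β ∈ Set.Ioo (-1 : ℝ) 1)
    (hsign : (β < 0 ∧ 0 < α) ∨ (α < 0 ∧ 0 < β))
    (l1 l2 F0 x0 : ℝ)
    (hl1 : l1 = (1 + α) / (1 - α)) (hl2 : l2 = (1 + β) / (1 - β))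
    (hF0 : F0 = l2 * (l1 - 1) / (l1 - l2)) (hx0 : x0 = (1 - l2) / (l1 - l2))
    (h0 h1 h2 : ℝ)
    (hh0 : h0 = 1 / Real.log (l1 / l2)) (hh1 : h1 = l2 / (l1 - l2)) :
    Continuous (Hmap h0 h1 h2) ∧ StrictMono (Hmap h0 h1 h2) ∧
    h0 * Real.log l1 = Real.log l1 / Real.log (l1 / l2) ∧
    ∀ x : ℝ, Hmap h0 h1 h2 (Fmap l1 l2 F0 x0 x) = Hmap h0 h1 h2 x + h0 * Real.log l1 := by
  have hl1p : 0 < l1 := hl1 ▸ one_add_div_one_sub_pos hα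
  have hl2p : 0 < l2 := hl2 ▸ one_add_div_one_sub_pos hβ
  have hC : (1 < l1 ∧ l2 < 1) ∨ (l1 < 1 ∧ 1 < l2) := by
    rw [hl1, hl2]
    rcases hsign with ⟨hβ0, hα0⟩ | ⟨hα0, hβ0⟩
    · exact .inl ⟨one_lt_one_add_div_one_sub hα0 hα.2, one_add_div_one_sub_lt_one hβ0⟩
    · exact .inr ⟨one_add_div_one_sub_lt_one hα0, one_lt_one_add_div_one_sub hβ0 hβ.2⟩
  have hl : l1 ≠ l2 := hC.elim (fun h => (h.2.trans h.1).ne') (fun h => (h.1.trans h.2).ne)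
  have hg1 := logBranch_one h2 hl1p hl2p hl hh0 hh1
  rw [Hmap_eq_degreeOneLift]
  refine ⟨continuous_degreeOneLift (continuousOn_logBranch h2 hl1p hl2p hl hh1) hg1,
    strictMono_degreeOneLift (strictMonoOn_logBranch h2 hl1p hl2p hl hh0 hh1) hg1,
    by rw [hh0, one_div_mul_eq_div], fun x => ?_⟩
  rw [← Hmap_eq_degreeOneLift]
  exact Hmap_Fmap hl1p hl2p hC hF0 hx0 hh0 hh1 h2 x

/-- `H` is continuous and strictly increasing on ℝ and conjugates `F` to the
translation by `ρ := h0·ln l1 = ln l1 / ln (l1/l2)`, i.e. `H(F(x)) = H(x) + ρ` for all `x`. -/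
theorem stmt3 (α β : ℝ) (hα : α ∈ Set.Ioo (-1 : ℝ) 1) (hβ : β ∈ Set.Ioo (-1 : ℝ) 1)
    (hαβ : α ≠ β) (hsign : (β < 0 ∧ 0 < α) ∨ (α < 0 ∧ 0 < β))
    (l1 l2 F0 x0 : ℝ)
    (hl1 : l1 = (1 + α) / (1 - α)) (hl2 : l2 = (1 + β) / (1 - β))
    (hF0 : F0 = l2 * (l1 - 1) / (l1 - l2)) (hx0 : x0 = (1 - l2) / (l1 - l2))
    (h0 h1 h2 : ℝ)
    (hh0 : h0 = 1 / Real.log (l1 / l2)) (hh1 : h1 = l2 / (l1 - l2))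
    (hh2 : h2 = -Real.log |h1|) :
    Continuous (Hmap h0 h1 h2) ∧ StrictMono (Hmap h0 h1 h2) ∧
    h0 * Real.log l1 = Real.log l1 / Real.log (l1 / l2) ∧
    ∀ x : ℝ, Hmap h0 h1 h2 (Fmap l1 l2 F0 x0 x) = Hmap h0 h1 h2 x + h0 * Real.log l1 :=
  stmt3_general α β hα hβ hsign l1 l2 F0 x0 hl1 hl2 hF0 hx0 h0 h1 h2 hh0 hh1
end

section
/- Let a : ℝ → ℝ be continuous with a(t) > 0 for all t, let ρ > 0, and let H : ℝ → ℝ be a continuous, strictly increasing bijection of ℝ onto ℝ satisfying H(t + a(t)) = H(t − a(t)) + ρ for every t ∈ ℝ. Then the restriction of Φ to the set D = {(x,t) ∈ ℝ² : 0 ≤ x ≤ a(t)} is a bijection from D onto [0, ρ/2] × ℝ; moreover the first coordinate of Φ(0,t) equals 0 for every t, and the first coordinate of Φ(a(t),t) equals ρ/2 for every t. -/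
/-- The domain transformation `Φ(x,t) = ((H(x+t) - H(-x+t))/2, (H(x+t) + H(-x+t))/2)`. -/
noncomputable def Phi (H : ℝ → ℝ) (q : ℝ × ℝ) : ℝ × ℝ :=
  ((H (q.1 + q.2) - H (-q.1 + q.2)) / 2, (H (q.1 + q.2) + H (-q.1 + q.2)) / 2)

/-- `Φ` restricted to `D = {(x,t) : 0 ≤ x ≤ a(t)}` is a bijection of `D` onto
`[0, ρ/2] × ℝ`; the first coordinate of `Φ(0,t)` is `0` and that of `Φ(a(t),t)` is `ρ/2`. -/
theorem stmt6 (a : ℝ → ℝ) (ha_cont : Continuous a) (ha_pos : ∀ t, 0 < a t)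
    (ρ : ℝ) (hρ : 0 < ρ) (H : ℝ → ℝ) (hH_cont : Continuous H) (hH_mono : StrictMono H)
    (hH_bij : Function.Bijective H)
    (hH_conj : ∀ t : ℝ, H (t + a t) = H (t - a t) + ρ) :
    Set.BijOn (Phi H) {q : ℝ × ℝ | 0 ≤ q.1 ∧ q.1 ≤ a q.2}
      (Set.Icc (0 : ℝ) (ρ / 2) ×ˢ (Set.univ : Set ℝ)) ∧
    (∀ t : ℝ, (Phi H (0, t)).1 = 0) ∧
    (∀ t : ℝ, (Phi H (a t, t)).1 = ρ / 2) := by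
  have hξ0 : ∀ t : ℝ, (Phi H (0, t)).1 = 0 := by
    intro t; simp [Phi]
  have hξa : ∀ t : ℝ, (Phi H (a t, t)).1 = ρ / 2 := by
    intro t
    have h := hH_conj t
    simp only [Phi]
    rw [show a t + t = t + a t by ring, show -(a t) + t = t - a t by ring, h]
    ring
  refine ⟨⟨?_, ?_, ?_⟩, hξ0, hξa⟩
  · -- MapsTo
    rintro ⟨x, t⟩ ⟨hx0, hxa⟩
    simp only [Set.mem_setOf_eq] at hx0 hxa
    refine ⟨⟨?_, ?_⟩, trivial⟩
    · have h1 : H (-x + t) ≤ H (x + t) := hH_mono.le_iff_le.mpr (by linarith)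
      simp only [Phi]; linarith
    · have h1 : H (x + t) ≤ H (t + a t) := hH_mono.le_iff_le.mpr (by linarith)
      have h2 : H (t - a t) ≤ H (-x + t) := hH_mono.le_iff_le.mpr (by linarith)
      have h := hH_conj t
      simp only [Phi]; linarith
  · -- InjOn
    rintro ⟨x, t⟩ - ⟨y, s⟩ - h
    simp only [Phi, Prod.mk.injEq] at h
    obtain ⟨h1, h2⟩ := h
    have e1 : H (x + t) = H (y + s) := by linarith
    have e2 : H (-x + t) = H (-y + s) := by linarith
    have f1 := hH_bij.1 e1
    have f2 := hH_bij.1 e2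
    have hx : x = y := by linarith
    have ht : t = s := by linarith
    simp [hx, ht]
  · -- SurjOn
    rintro ⟨ξ, τ⟩ ⟨⟨hξl, hξr⟩, -⟩
    obtain ⟨u, hu⟩ := hH_bij.2 (τ + ξ)
    obtain ⟨v, hv⟩ := hH_bij.2 (τ - ξ)
    have huv : v ≤ u := by
      have : H v ≤ H u := by rw [hu, hv]; linarith
      exact hH_mono.le_iff_le.mp this
    set x := (u - v) / 2 with hxdef
    set t := (u + v) / 2 with htdef
    have hx' : x + t = u := by rw [hxdef, htdef]; ring
    have ht' : -x + t = v := by rw [hxdef, htdef]; ring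
    have hx0 : 0 ≤ x := by rw [hxdef]; linarith
    have hxa : x ≤ a t := by
      by_contra hlt
      push_neg at hlt
      have h1 : H (t + a t) < H (x + t) := hH_mono (by linarith)
      have h2 : H (-x + t) < H (t - a t) := hH_mono (by linarith)
      have hc := hH_conj t
      rw [hx', hu] at h1
      rw [ht', hv] at h2
      linarith
    refine ⟨(x, t), ⟨hx0, hxa⟩, ?_⟩
    simp only [Phi, hx', ht', hu, hv, Prod.mk.injEq]
    constructor <;> ring
end

section
/- Let H : ℝ → ℝ be twice continuously differentiable and let V : ℝ² → ℝ be twice continuously differentiable. Define u(x,t) = V(Φ(x,t)). Then for every (x,t) ∈ ℝ²: ∂²u/∂t²(x,t) − ∂²u/∂x²(x,t) = H′(x+t)·H′(−x+t)·(∂²V/∂τ² − ∂²V/∂ξ²)(Φ(x,t)). In particular, if V solves the wave equation ∂²V/∂τ² = ∂²V/∂ξ², then u solves the wave equation ∂²u/∂t² = ∂²u/∂x². -/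
/-- Partial derivative in the first variable of a function on `ℝ²`. -/
noncomputable def pdx (V : ℝ × ℝ → ℝ) (q : ℝ × ℝ) : ℝ :=
  deriv (fun s => V (s, q.2)) q.1

/-- Partial derivative in the second variable of a function on `ℝ²`. -/
noncomputable def pdt (V : ℝ × ℝ → ℝ) (q : ℝ × ℝ) : ℝ :=
  deriv (fun s => V (q.1, s)) q.2

/-!
The partial derivatives of `Φ_H` are again of the form `Φ`: `∂ₜΦ_H = Φ_{H'}`, and `∂ₓΦ_H` is
`Φ_{H'}` with its two coordinates swapped. Differentiating `u = V ∘ Φ_H` twice by the chain rule,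
the terms in the first derivatives of `V` and the mixed second derivatives cancel in `u_tt - u_xx`
(each mixed term against itself, so symmetry of second derivatives is never needed), which leaves
`(ψ₂² - ψ₁²) (V_ττ - V_ξξ) ∘ Φ_H` with `ψ = Φ_{H'}`; and `ψ₂² - ψ₁² = H'(x+t) H'(-x+t)`.
-/

variable {W : ℝ × ℝ → ℝ} {H : ℝ → ℝ}

lemma pdx_eq_fderiv {q : ℝ × ℝ} (hW : DifferentiableAt ℝ W q) :
    pdx W q = fderiv ℝ W q (1, 0) :=
  (hW.hasFDerivAt.comp_hasDerivAt q.1 ((hasDerivAt_id q.1).prodMk (hasDerivAt_const _ _))).deriv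

lemma pdt_eq_fderiv {q : ℝ × ℝ} (hW : DifferentiableAt ℝ W q) :
    pdt W q = fderiv ℝ W q (0, 1) :=
  (hW.hasFDerivAt.comp_hasDerivAt q.2 ((hasDerivAt_const _ _).prodMk (hasDerivAt_id q.2))).deriv

lemma contDiff_pdx {n m : WithTop ℕ∞} (hW : ContDiff ℝ n W) (hmn : m + 1 ≤ n) :
    ContDiff ℝ m (pdx W) := by
  have hd : Differentiable ℝ W := hW.differentiable (by rintro rfl; simp at hmn)
  have hpdx : pdx W = fun q => fderiv ℝ W q (1, 0) := funext fun q => pdx_eq_fderiv (hd q)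
  rw [hpdx]
  exact (hW.fderiv_right hmn).clm_apply contDiff_const

lemma contDiff_pdt {n m : WithTop ℕ∞} (hW : ContDiff ℝ n W) (hmn : m + 1 ≤ n) :
    ContDiff ℝ m (pdt W) := by
  have hd : Differentiable ℝ W := hW.differentiable (by rintro rfl; simp at hmn)
  have hpdt : pdt W = fun q => fderiv ℝ W q (0, 1) := funext fun q => pdt_eq_fderiv (hd q)
  rw [hpdt]
  exact (hW.fderiv_right hmn).clm_apply contDiff_const

lemma HasDerivAt.comp_pdx_pdt {γ : ℝ → ℝ × ℝ} {d : ℝ × ℝ} {s : ℝ}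
    (hγ : HasDerivAt γ d s) (hW : DifferentiableAt ℝ W (γ s)) :
    HasDerivAt (fun r => W (γ r)) (pdx W (γ s) * d.1 + pdt W (γ s) * d.2) s := by
  refine (hW.hasFDerivAt.comp_hasDerivAt s hγ).congr_deriv ?_
  have hd : d = d.1 • ((1 : ℝ), (0 : ℝ)) + d.2 • ((0 : ℝ), (1 : ℝ)) := by simp
  rw [pdx_eq_fderiv hW, pdt_eq_fderiv hW]
  conv_lhs => rw [hd]
  simp only [map_add, map_smul, smul_eq_mul]
  ring

lemma Phi_snd_sq_sub_fst_sq (q : ℝ × ℝ) :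
    (Phi H q).2 ^ 2 - (Phi H q).1 ^ 2 = H (q.1 + q.2) * H (-q.1 + q.2) := by
  simp only [Phi]
  ring

lemma hasDerivAt_Phi_fst_slice (hH : Differentiable ℝ H) (q : ℝ × ℝ) :
    HasDerivAt (fun s => Phi H (s, q.2)) (Phi (deriv H) q).swap q.1 := by
  have hp : HasDerivAt (fun s => H (s + q.2)) (deriv H (q.1 + q.2)) q.1 :=
    (hH _).hasDerivAt.comp_add_const q.1 q.2
  have hm : HasDerivAt (fun s => H (-s + q.2)) (-deriv H (-q.1 + q.2)) q.1 :=
    ((hH _).hasDerivAt.comp q.1 ((hasDerivAt_neg q.1).add_const q.2)).congr_deriv (mul_neg_one _)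
  refine (((hp.sub hm).div_const 2).prodMk ((hp.add hm).div_const 2)).congr_deriv ?_
  simp only [Phi, Prod.swap_prod_mk, sub_neg_eq_add, ← sub_eq_add_neg]

lemma hasDerivAt_Phi_snd_slice (hH : Differentiable ℝ H) (q : ℝ × ℝ) :
    HasDerivAt (fun s => Phi H (q.1, s)) (Phi (deriv H) q) q.2 := by
  have hp : HasDerivAt (fun s => H (q.1 + s)) (deriv H (q.1 + q.2)) q.2 :=
    (hH _).hasDerivAt.comp_const_add q.1 q.2
  have hm : HasDerivAt (fun s => H (-q.1 + s)) (deriv H (-q.1 + q.2)) q.2 :=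
    (hH _).hasDerivAt.comp_const_add (-q.1) q.2
  exact ((hp.sub hm).div_const 2).prodMk ((hp.add hm).div_const 2)

lemma hasDerivAt_comp_Phi_fst_slice (hH : Differentiable ℝ H) {q : ℝ × ℝ}
    (hW : DifferentiableAt ℝ W (Phi H q)) :
    HasDerivAt (fun s => W (Phi H (s, q.2)))
      (pdx W (Phi H q) * (Phi (deriv H) q).2 + pdt W (Phi H q) * (Phi (deriv H) q).1) q.1 :=
  (hasDerivAt_Phi_fst_slice hH q).comp_pdx_pdt hW

lemma hasDerivAt_comp_Phi_snd_slice (hH : Differentiable ℝ H) {q : ℝ × ℝ}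
    (hW : DifferentiableAt ℝ W (Phi H q)) :
    HasDerivAt (fun s => W (Phi H (q.1, s)))
      (pdx W (Phi H q) * (Phi (deriv H) q).1 + pdt W (Phi H q) * (Phi (deriv H) q).2) q.2 :=
  (hasDerivAt_Phi_snd_slice hH q).comp_pdx_pdt hW

lemma pdx_comp_Phi (hH : Differentiable ℝ H) (hW : Differentiable ℝ W) :
    pdx (fun q => W (Phi H q)) =
      fun q => pdx W (Phi H q) * (Phi (deriv H) q).2 + pdt W (Phi H q) * (Phi (deriv H) q).1 :=
  funext fun _ => (hasDerivAt_comp_Phi_fst_slice hH (hW _)).deriv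

lemma pdt_comp_Phi (hH : Differentiable ℝ H) (hW : Differentiable ℝ W) :
    pdt (fun q => W (Phi H q)) =
      fun q => pdx W (Phi H q) * (Phi (deriv H) q).1 + pdt W (Phi H q) * (Phi (deriv H) q).2 :=
  funext fun _ => (hasDerivAt_comp_Phi_snd_slice hH (hW _)).deriv

lemma pdt_pdt_sub_pdx_pdx_comp_Phi {V : ℝ × ℝ → ℝ} (hH : Differentiable ℝ H)
    (hH' : Differentiable ℝ (deriv H)) (hV : Differentiable ℝ V)
    (hVx : Differentiable ℝ (pdx V)) (hVt : Differentiable ℝ (pdt V)) (q : ℝ × ℝ) :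
    pdt (pdt fun q => V (Phi H q)) q - pdx (pdx fun q => V (Phi H q)) q =
      ((Phi (deriv H) q).2 ^ 2 - (Phi (deriv H) q).1 ^ 2) *
        (pdt (pdt V) (Phi H q) - pdx (pdx V) (Phi H q)) := by
  have htt := (((hasDerivAt_comp_Phi_snd_slice hH (hVx _)).mul
    (hasDerivAt_Phi_snd_slice hH' q).fst).add ((hasDerivAt_comp_Phi_snd_slice hH (hVt _)).mul
    (hasDerivAt_Phi_snd_slice hH' q).snd)).deriv
  have hxx := (((hasDerivAt_comp_Phi_fst_slice hH (hVx _)).mul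
    (hasDerivAt_Phi_fst_slice hH' q).snd).add ((hasDerivAt_comp_Phi_fst_slice hH (hVt _)).mul
    (hasDerivAt_Phi_fst_slice hH' q).fst)).deriv
  rw [pdt_comp_Phi hH hV, pdx_comp_Phi hH hV]
  refine (congrArg₂ (· - ·) htt hxx).trans ?_
  rw [Prod.fst_swap, Prod.snd_swap]
  ring

/-- for `u = V ∘ Φ`,
`∂²u/∂t² - ∂²u/∂x² = H'(x+t)·H'(-x+t)·(∂²V/∂τ² - ∂²V/∂ξ²) ∘ Φ`; in particular if `V`
solves the wave equation then so does `u`. -/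
theorem stmt7 (H : ℝ → ℝ) (hH : ContDiff ℝ 2 H) (V : ℝ × ℝ → ℝ) (hV : ContDiff ℝ 2 V)
    (u : ℝ × ℝ → ℝ) (hu : ∀ q : ℝ × ℝ, u q = V (Phi H q)) :
    (∀ x t : ℝ,
      pdt (pdt u) (x, t) - pdx (pdx u) (x, t) =
        deriv H (x + t) * deriv H (-x + t) *
          (pdt (pdt V) (Phi H (x, t)) - pdx (pdx V) (Phi H (x, t)))) ∧
    ((∀ q : ℝ × ℝ, pdt (pdt V) q = pdx (pdx V) q) →
      ∀ q : ℝ × ℝ, pdt (pdt u) q = pdx (pdx u) q) := by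
  obtain rfl : u = fun q => V (Phi H q) := funext hu
  have hwave := pdt_pdt_sub_pdx_pdx_comp_Phi (hH.differentiable two_ne_zero)
    hH.differentiable_deriv_two (hV.differentiable two_ne_zero)
    ((contDiff_pdx hV (m := 1) (by norm_num)).differentiable one_ne_zero)
    ((contDiff_pdt hV (m := 1) (by norm_num)).differentiable one_ne_zero)
  refine ⟨fun x t => ?_, fun hVwave q => ?_⟩
  · rw [hwave, Phi_snd_sq_sub_fst_sq]
  · rw [← sub_eq_zero, hwave, hVwave, sub_self, mul_zero]
end
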